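/- arXiv:math/0305237 — 2 statements merged into one kernel-verified Lean document; each statement's English description precedes it below -/
import Mathlib

section
/- Let n > 1 and let θ be a C² function with positive values defined near a point s₀ = x₁² ≥ 0, and set ρ(x+iy) = |y|² − θ(|x|²). Let p = (x₁ + i y₁, i y₂, 0, …, 0) ∈ ℂⁿ with y₁² + y₂² = θ(x₁²). For λ ∈ ℂ and v'' = (v₃,…,vₙ) ∈ ℂ^{n−2}, put v = (−i λ y₂, λ (x₁ θ'(x₁²) + i y₁), v₃, …, vₙ) ∈ ℂⁿ. Then ∑_{k=1}^n (∂ρ/∂z_k)(p) v_k = 0 (so v ∈ T_p^ℂΣ), every element of T_p^ℂΣ has this form, and 2 L_ρ(p;v) = |λ|² ( −2 x₁² y₂² θ''(x₁²) + (1 − θ'(x₁²)) (x₁² θ'(x₁²)² + θ(x₁²)) ) + (1 − θ'(x₁²)) |v''|². -/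
open Complex Set

/-- The Levi form of a `C²` function `ρ` at `p` in direction `v`:
`4 L_ρ(p;v) = H_p(v,v) + H_p(iv,iv)` where `H_p` is the second real Fréchet derivative. -/
noncomputable def leviForm {E : Type*} [NormedAddCommGroup E] [NormedSpace ℂ E]
    (ρ : E → ℝ) (p v : E) : ℝ :=
  (iteratedFDeriv ℝ 2 ρ p ![v, v]
    + iteratedFDeriv ℝ 2 ρ p ![Complex.I • v, Complex.I • v]) / 4

/-- The complex tangent space `T_p^ℂΣ = {v : dρ_p(v) = 0 and dρ_p(iv) = 0}`. -/
def complexTangent {E : Type*} [NormedAddCommGroup E] [NormedSpace ℂ E]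
    (ρ : E → ℝ) (p : E) : Set E :=
  {v | fderiv ℝ ρ p v = 0 ∧ fderiv ℝ ρ p (Complex.I • v) = 0}

/-- `ρ(x+iy) = |y|² - θ(|x|²)`. -/
noncomputable def rho (n : ℕ) (θ : ℝ → ℝ) : (Fin n → ℂ) → ℝ :=
  fun z => (∑ j, (z j).im ^ 2) - θ (∑ j, (z j).re ^ 2)

/-- The hypersurface `Σ = {x+iy : x ∈ U, |y|² = θ(|x|²)}`. -/
def SigmaSet (n : ℕ) (U : Set (Fin n → ℝ)) (θ : ℝ → ℝ) : Set (Fin n → ℂ) :=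
  {z | (fun j => (z j).re) ∈ U ∧ (∑ j, (z j).im ^ 2) = θ (∑ j, (z j).re ^ 2)}

/-! Write `ρ(z) = Q_im(z) - θ(Q_re(z))` with the real quadratic forms `Q_re(z) = ∑ (Re z_j)²`
and `Q_im(z) = ∑ (Im z_j)²`. The chain rule computes `dρ` and `d²ρ` explicitly; averaging the
Hessian over `v` and `iv` gives `2 L_ρ(z;v) = (1 - θ'(s)) |v|² - 2 θ''(s) |∑ Re z_j v_j|²` with
`s = Q_re(z)`, and `dρ(iv) + i dρ(v) = 2 ∑ (Im z_j - i θ'(s) Re z_j) v_j` exhibits `T_z^ℂΣ` as the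
kernel of a single complex linear form. At `p` this form only involves `v₁, v₂`, and it is nonzero
because `y₁² + y₂² = θ(x₁²) > 0`; its kernel is therefore the line parametrised by `λ`, and
substituting into the general Levi form gives the stated value. -/

open Filter Topology

section

variable {n : ℕ}

noncomputable def reDot : (Fin n → ℂ) →L[ℝ] (Fin n → ℂ) →L[ℝ] ℝ :=
  ∑ j, (reCLM.comp (.proj j)).smulRight (reCLM.comp (.proj j))

noncomputable def imDot : (Fin n → ℂ) →L[ℝ] (Fin n → ℂ) →L[ℝ] ℝ :=
  ∑ j, (imCLM.comp (.proj j)).smulRight (imCLM.comp (.proj j))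

@[simp] lemma reDot_apply (z w : Fin n → ℂ) : reDot z w = ∑ j, (z j).re * (w j).re := by
  simp [reDot]

@[simp] lemma imDot_apply (z w : Fin n → ℂ) : imDot z w = ∑ j, (z j).im * (w j).im := by
  simp [imDot]

lemma hasFDerivAt_apply_self {E : Type*} [NormedAddCommGroup E] [NormedSpace ℝ E]
    (B : E →L[ℝ] E →L[ℝ] ℝ) (hB : ∀ z w, B z w = B w z) (z : E) :
    HasFDerivAt (fun w => B w w) ((2 : ℝ) • B z) z := by
  refine (B.hasFDerivAt.clm_apply (hasFDerivAt_id z)).congr_fderiv ?_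
  ext w
  simp [two_smul, hB w z]

lemma rho_eq_imDot_sub (θ : ℝ → ℝ) : rho n θ = fun z => imDot z z - θ (reDot z z) := by
  ext z
  simp [rho, sq]

lemma hasFDerivAt_reDot_self (z : Fin n → ℂ) :
    HasFDerivAt (fun w => reDot w w) ((2 : ℝ) • reDot z) z :=
  hasFDerivAt_apply_self _ (fun z w => by simp [mul_comm]) z

lemma hasFDerivAt_imDot_self (z : Fin n → ℂ) :
    HasFDerivAt (fun w => imDot w w) ((2 : ℝ) • imDot z) z :=
  hasFDerivAt_apply_self _ (fun z w => by simp [mul_comm]) z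

variable {θ : ℝ → ℝ} {z : Fin n → ℂ}

lemma hasFDerivAt_rho (hθ : DifferentiableAt ℝ θ (reDot z z)) :
    HasFDerivAt (rho n θ) ((2 : ℝ) • imDot z - (2 * deriv θ (reDot z z)) • reDot z) z := by
  rw [rho_eq_imDot_sub]
  have hcomp := hθ.hasDerivAt.comp_hasFDerivAt (f := fun w => reDot w w) z
    (hasFDerivAt_reDot_self z)
  refine ((hasFDerivAt_imDot_self z).sub hcomp).congr_fderiv ?_
  rw [smul_smul, mul_comm]

lemma fderiv_fderiv_rho_apply (hθ : ContDiffAt ℝ 2 θ (reDot z z)) (w u : Fin n → ℂ) :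
    fderiv ℝ (fderiv ℝ (rho n θ)) z w u = 2 * imDot w u - 2 * deriv θ (reDot z z) * reDot w u
      - 4 * deriv (deriv θ) (reDot z z) * reDot z w * reDot z u := by
  have hnear : ∀ᶠ y in 𝓝 z, DifferentiableAt ℝ θ (reDot y y) :=
    (hasFDerivAt_reDot_self z).continuousAt.eventually
      ((hθ.eventually (by simp)).mono fun t ht => ht.differentiableAt (by norm_num))
  have hfd : fderiv ℝ (rho n θ) =ᶠ[𝓝 z]
      fun y => (2 : ℝ) • imDot y - (2 * deriv θ (reDot y y)) • reDot y :=
    hnear.mono fun y hy => (hasFDerivAt_rho hy).fderiv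
  have hθ' : HasDerivAt (deriv θ) (deriv (deriv θ) (reDot z z)) (reDot z z) :=
    ((hθ.derivWithin (m := 1) (by norm_num)).differentiableAt (by norm_num)).hasDerivAt
  have hcoef := (hθ'.comp_hasFDerivAt (f := fun w => reDot w w) z
    (hasFDerivAt_reDot_self z)).const_mul 2
  have hG := ((2 : ℝ) • imDot).hasFDerivAt.sub (hcoef.smul reDot.hasFDerivAt)
  rw [(hG.congr_of_eventuallyEq hfd).fderiv]
  simp only [sub_apply, add_apply, smul_apply, ContinuousLinearMap.smulRight_apply,
    Function.comp_apply, smul_eq_mul]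
  ring

lemma two_mul_leviForm_rho (hθ : ContDiffAt ℝ 2 θ (reDot z z)) (v : Fin n → ℂ) :
    2 * leviForm (rho n θ) z v = (1 - deriv θ (reDot z z)) * ∑ j, ‖v j‖ ^ 2
      - 2 * deriv (deriv θ) (reDot z z) * ‖∑ j, ((z j).re : ℂ) * v j‖ ^ 2 := by
  have him : imDot v v + imDot (I • v) (I • v) = ∑ j, ‖v j‖ ^ 2 := by
    simp [← Finset.sum_add_distrib, Complex.sq_norm, Complex.normSq_apply, add_comm]
  have hre : reDot v v + reDot (I • v) (I • v) = ∑ j, ‖v j‖ ^ 2 := by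
    simp [← Finset.sum_add_distrib, Complex.sq_norm, Complex.normSq_apply]
  have hcross : reDot z v ^ 2 + reDot z (I • v) ^ 2 = ‖∑ j, ((z j).re : ℂ) * v j‖ ^ 2 := by
    rw [Complex.sq_norm, Complex.normSq_apply, Complex.re_sum, Complex.im_sum]
    simp [sq]
  rw [leviForm, iteratedFDeriv_two_apply, iteratedFDeriv_two_apply]
  simp only [Matrix.cons_val_zero, Matrix.cons_val_one, fderiv_fderiv_rho_apply hθ]
  linear_combination him - deriv θ (reDot z z) * hre - 2 * deriv (deriv θ) (reDot z z) * hcross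

lemma mem_complexTangent_rho_iff (hθ : DifferentiableAt ℝ θ (reDot z z)) (v : Fin n → ℂ) :
    v ∈ complexTangent (rho n θ) z ↔
      ∑ j, ((z j).im - deriv θ (reDot z z) * (z j).re * I : ℂ) * v j = 0 := by
  set S := ∑ j, ((z j).im - deriv θ (reDot z z) * (z j).re * I : ℂ) * v j
  have hv : fderiv ℝ (rho n θ) z v = 2 * S.im := by
    simp only [(hasFDerivAt_rho hθ).fderiv, reDot_apply, sub_apply, smul_apply, imDot_apply,
      smul_eq_mul, Finset.mul_sum, ← Finset.sum_sub_distrib, im_sum, mul_im, sub_re, ofReal_re,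
      mul_re, ofReal_im, mul_zero, sub_zero, I_re, zero_mul, add_zero, I_im, mul_one, sub_self,
      sub_im, zero_sub, neg_mul, S]
    exact Finset.sum_congr rfl fun j _ => by ring
  have hIv : fderiv ℝ (rho n θ) z (I • v) = 2 * S.re := by
    simp only [(hasFDerivAt_rho hθ).fderiv, reDot_apply, sub_apply, smul_apply, imDot_apply,
      Pi.smul_apply, smul_eq_mul, mul_im, I_re, zero_mul, I_im, one_mul, zero_add, Finset.mul_sum,
      mul_re, zero_sub, mul_neg, Finset.sum_neg_distrib, sub_neg_eq_add, ← Finset.sum_add_distrib,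
      re_sum, sub_re, ofReal_re, ofReal_im, mul_zero, sub_zero, add_zero, mul_one, sub_self, sub_im,
      neg_mul, S]
    exact Finset.sum_congr rfl fun j _ => by ring
  rw [complexTangent, Set.mem_ofPred_eq, hv, hIv, Complex.ext_iff]
  simp only [mul_eq_zero, OfNat.ofNat_ne_zero, false_or, zero_re, zero_im]
  tauto

lemma exists_eq_neg_mul_and_eq_mul_of_mul_add_mul_eq_zero {K : Type*} [Field K] {α β a b : K}
    (hαβ : α ≠ 0 ∨ β ≠ 0) (h : α * a + β * b = 0) : ∃ μ, a = -β * μ ∧ b = α * μ := by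
  rcases eq_or_ne β 0 with rfl | hβ
  · have hα : α ≠ 0 := hαβ.resolve_right (not_not.2 rfl)
    refine ⟨b / α, ?_, by field_simp⟩
    simpa [hα] using h
  · refine ⟨-a / β, by field_simp, ?_⟩
    field_simp
    linear_combination h

lemma sum_eq_add_add_sum_filter_two_le {M : Type*} [AddCommMonoid M] (hn : 1 < n)
    (f : Fin n → M) : ∑ j, f j = f ⟨0, by omega⟩ + f ⟨1, hn⟩ +
      ∑ j ∈ Finset.univ.filter (fun j : Fin n => 2 ≤ (j : ℕ)), f j := by
  rw [← Finset.sum_filter_add_sum_filter_not Finset.univ (fun j : Fin n => 2 ≤ (j : ℕ)),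
    add_comm]
  congr 1
  have : Finset.univ.filter (fun j : Fin n => ¬ 2 ≤ (j : ℕ)) = {⟨0, by omega⟩, ⟨1, hn⟩} := by
    ext j
    simp only [Finset.mem_filter, Finset.mem_univ, true_and, Finset.mem_insert,
      Finset.mem_singleton, Fin.ext_iff]
    omega
  rw [this, Finset.sum_pair (by simp [Fin.ext_iff])]

lemma sum_eq_add_of_two_le_eq_zero {M : Type*} [AddCommMonoid M] (hn : 1 < n) (f : Fin n → M)
    (hf : ∀ j : Fin n, 2 ≤ (j : ℕ) → f j = 0) : ∑ j, f j = f ⟨0, by omega⟩ + f ⟨1, hn⟩ := by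
  rw [sum_eq_add_add_sum_filter_two_le hn, Finset.sum_eq_zero fun j hj => hf j (by simpa using hj),
    add_zero]

def basePoint (n : ℕ) (x₁ y₁ y₂ : ℝ) : Fin n → ℂ := fun j =>
  if (j : ℕ) = 0 then (x₁ : ℂ) + y₁ * I else if (j : ℕ) = 1 then (y₂ : ℂ) * I else 0

section basePoint

variable {x₁ y₁ y₂ : ℝ}

@[simp] lemma basePoint_zero (h : 0 < n) : basePoint n x₁ y₁ y₂ ⟨0, h⟩ = x₁ + y₁ * I := rfl

@[simp] lemma basePoint_one (h : 1 < n) : basePoint n x₁ y₁ y₂ ⟨1, h⟩ = y₂ * I := rfl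

lemma basePoint_of_two_le {j : Fin n} (hj : 2 ≤ (j : ℕ)) : basePoint n x₁ y₁ y₂ j = 0 := by
  simp only [basePoint]
  rw [if_neg (by omega), if_neg (by omega)]

lemma reDot_basePoint (hn : 1 < n) :
    reDot (basePoint n x₁ y₁ y₂) (basePoint n x₁ y₁ y₂) = x₁ ^ 2 := by
  rw [reDot_apply, sum_eq_add_of_two_le_eq_zero hn _ fun j hj => by simp [basePoint_of_two_le hj]]
  simp [sq]

lemma mem_complexTangent_basePoint_iff (hn : 1 < n) (hθ : DifferentiableAt ℝ θ (x₁ ^ 2))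
    (v : Fin n → ℂ) :
    v ∈ complexTangent (rho n θ) (basePoint n x₁ y₁ y₂) ↔
      (y₁ - deriv θ (x₁ ^ 2) * x₁ * I) * v ⟨0, by omega⟩ + y₂ * v ⟨1, hn⟩ = 0 := by
  rw [mem_complexTangent_rho_iff (by rwa [reDot_basePoint hn]), reDot_basePoint hn,
    sum_eq_add_of_two_le_eq_zero hn _ fun j hj => by simp [basePoint_of_two_le hj]]
  simp

lemma mem_complexTangent_basePoint_iff_exists (hn : 1 < n) (hθ : DifferentiableAt ℝ θ (x₁ ^ 2))
    (hy : 0 < y₁ ^ 2 + y₂ ^ 2) (v : Fin n → ℂ) :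
    v ∈ complexTangent (rho n θ) (basePoint n x₁ y₁ y₂) ↔ ∃ lam : ℂ,
      v ⟨0, by omega⟩ = -(I * lam * y₂) ∧ v ⟨1, hn⟩ = lam * (x₁ * deriv θ (x₁ ^ 2) + I * y₁) := by
  rw [mem_complexTangent_basePoint_iff hn hθ]
  constructor
  · intro hv
    have hαβ : (y₁ - deriv θ (x₁ ^ 2) * x₁ * I : ℂ) ≠ 0 ∨ (y₂ : ℂ) ≠ 0 := by
      by_contra! h
      have hy₁ : y₁ = 0 := by simpa using congrArg re h.1
      have hy₂ : y₂ = 0 := by exact_mod_cast h.2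
      simp [hy₁, hy₂] at hy
    obtain ⟨μ, h0, h1⟩ := exists_eq_neg_mul_and_eq_mul_of_mul_add_mul_eq_zero hαβ hv
    refine ⟨-I * μ, ?_, ?_⟩
    · rw [h0]
      linear_combination (-y₂ * μ : ℂ) * I_sq
    · rw [h1]
      linear_combination (y₁ * μ : ℂ) * I_sq
  · rintro ⟨lam, h0, h1⟩
    rw [h0, h1]
    linear_combination (deriv θ (x₁ ^ 2) * x₁ * lam * y₂ : ℂ) * I_sq

lemma two_mul_leviForm_basePoint (hn : 1 < n) (hθ : ContDiffAt ℝ 2 θ (x₁ ^ 2)) {lam : ℂ}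
    {v : Fin n → ℂ} (h0 : v ⟨0, by omega⟩ = -(I * lam * y₂))
    (h1 : v ⟨1, hn⟩ = lam * (x₁ * deriv θ (x₁ ^ 2) + I * y₁)) :
    2 * leviForm (rho n θ) (basePoint n x₁ y₁ y₂) v =
      ‖lam‖ ^ 2 * (-(2 * x₁ ^ 2 * y₂ ^ 2 * deriv (deriv θ) (x₁ ^ 2))
          + (1 - deriv θ (x₁ ^ 2)) * (x₁ ^ 2 * deriv θ (x₁ ^ 2) ^ 2 + (y₁ ^ 2 + y₂ ^ 2)))
        + (1 - deriv θ (x₁ ^ 2)) *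
          ∑ j ∈ Finset.univ.filter (fun j : Fin n => 2 ≤ (j : ℕ)), ‖v j‖ ^ 2 := by
  have hnorm : ‖(x₁ * deriv θ (x₁ ^ 2) + I * y₁ : ℂ)‖ ^ 2 =
      x₁ ^ 2 * deriv θ (x₁ ^ 2) ^ 2 + y₁ ^ 2 := by
    rw [Complex.sq_norm, Complex.normSq_apply]
    simp only [add_re, mul_re, ofReal_re, ofReal_im, mul_zero, sub_zero, I_re, zero_mul, I_im,
      sub_self, add_zero, add_im, mul_im, one_mul, zero_add]
    ring
  rw [two_mul_leviForm_rho (by rwa [reDot_basePoint hn]), reDot_basePoint hn,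
    sum_eq_add_add_sum_filter_two_le hn,
    sum_eq_add_of_two_le_eq_zero hn _ fun j hj => by simp [basePoint_of_two_le hj]]
  simp only [basePoint_zero, basePoint_one, h0, h1, norm_mul, norm_neg, mul_pow, hnorm, norm_I,
    one_mul, norm_real, Real.norm_eq_abs, sq_abs, add_re, ofReal_re, mul_re, I_re,
    mul_zero, ofReal_im, I_im, mul_one, sub_self, add_zero, mul_neg, ofReal_zero, zero_mul]
  ring

end basePoint

end

theorem stmt_4_general {n : ℕ} (hn : 1 < n)
    (x₁ y₁ y₂ : ℝ)
    (θ : ℝ → ℝ) (V : Set ℝ) (hV : IsOpen V) (hs₀ : x₁ ^ 2 ∈ V)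
    (hθ : ContDiffOn ℝ 2 θ V) (hθpos : ∀ s ∈ V, 0 < θ s)
    (hcirc : y₁ ^ 2 + y₂ ^ 2 = θ (x₁ ^ 2))
    (p : Fin n → ℂ)
    (hp : p = fun j : Fin n => if (j : ℕ) = 0 then (x₁ : ℂ) + y₁ * Complex.I
      else if (j : ℕ) = 1 then (y₂ : ℂ) * Complex.I else 0) :
    -- every vector of the indicated form lies in `T_p^ℂΣ` and its Levi form is given
    -- by the stated formula
    (∀ (lam : ℂ) (v : Fin n → ℂ),
      (∀ j : Fin n, (j : ℕ) = 0 → v j = -(Complex.I * lam * y₂)) →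
      (∀ j : Fin n, (j : ℕ) = 1 →
        v j = lam * ((x₁ : ℂ) * (deriv θ (x₁ ^ 2) : ℝ) + Complex.I * y₁)) →
      v ∈ complexTangent (rho n θ) p ∧
      2 * leviForm (rho n θ) p v =
        ‖lam‖ ^ 2 * (-(2 * x₁ ^ 2 * y₂ ^ 2 * deriv (deriv θ) (x₁ ^ 2))
            + (1 - deriv θ (x₁ ^ 2)) * (x₁ ^ 2 * (deriv θ (x₁ ^ 2)) ^ 2 + θ (x₁ ^ 2)))
          + (1 - deriv θ (x₁ ^ 2)) *
            ∑ j ∈ Finset.univ.filter (fun j : Fin n => 2 ≤ (j : ℕ)), ‖v j‖ ^ 2) ∧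
    -- and every element of `T_p^ℂΣ` has this form
    (∀ v ∈ complexTangent (rho n θ) p, ∃ lam : ℂ,
      (∀ j : Fin n, (j : ℕ) = 0 → v j = -(Complex.I * lam * y₂)) ∧
      (∀ j : Fin n, (j : ℕ) = 1 →
        v j = lam * ((x₁ : ℂ) * (deriv θ (x₁ ^ 2) : ℝ) + Complex.I * y₁))) := by
  obtain rfl : p = basePoint n x₁ y₁ y₂ := hp
  have hθs : ContDiffAt ℝ 2 θ (x₁ ^ 2) := hθ.contDiffAt (hV.mem_nhds hs₀)
  have hθd : DifferentiableAt ℝ θ (x₁ ^ 2) := hθs.differentiableAt (by norm_num)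
  have hy : 0 < y₁ ^ 2 + y₂ ^ 2 := hcirc ▸ hθpos _ hs₀
  refine ⟨fun lam v hv0 hv1 => ⟨?_, ?_⟩, fun v hv => ?_⟩
  · exact (mem_complexTangent_basePoint_iff_exists hn hθd hy v).2 ⟨lam, hv0 _ rfl, hv1 _ rfl⟩
  · rw [two_mul_leviForm_basePoint hn hθs (hv0 _ rfl) (hv1 _ rfl), hcirc]
  · obtain ⟨lam, h0, h1⟩ := (mem_complexTangent_basePoint_iff_exists hn hθd hy v).1 hv
    refine ⟨lam, fun j hj => ?_, fun j hj => ?_⟩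
    · rwa [show j = ⟨0, Nat.zero_lt_of_lt hn⟩ from Fin.ext hj]
    · rwa [show j = ⟨1, hn⟩ from Fin.ext hj]

theorem stmt_4 {n : ℕ} (hn : 1 < n)
    (x₁ y₁ y₂ : ℝ) (hx₁ : 0 ≤ x₁)
    (θ : ℝ → ℝ) (V : Set ℝ) (hV : IsOpen V) (hs₀ : x₁ ^ 2 ∈ V)
    (hθ : ContDiffOn ℝ 2 θ V) (hθpos : ∀ s ∈ V, 0 < θ s)
    (hcirc : y₁ ^ 2 + y₂ ^ 2 = θ (x₁ ^ 2))
    (p : Fin n → ℂ)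
    (hp : p = fun j : Fin n => if (j : ℕ) = 0 then (x₁ : ℂ) + y₁ * Complex.I
      else if (j : ℕ) = 1 then (y₂ : ℂ) * Complex.I else 0) :
    -- every vector of the indicated form lies in `T_p^ℂΣ` and its Levi form is given
    -- by the stated formula
    (∀ (lam : ℂ) (v : Fin n → ℂ),
      (∀ j : Fin n, (j : ℕ) = 0 → v j = -(Complex.I * lam * y₂)) →
      (∀ j : Fin n, (j : ℕ) = 1 →
        v j = lam * ((x₁ : ℂ) * (deriv θ (x₁ ^ 2) : ℝ) + Complex.I * y₁)) →
      v ∈ complexTangent (rho n θ) p ∧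
      2 * leviForm (rho n θ) p v =
        ‖lam‖ ^ 2 * (-(2 * x₁ ^ 2 * y₂ ^ 2 * deriv (deriv θ) (x₁ ^ 2))
            + (1 - deriv θ (x₁ ^ 2)) * (x₁ ^ 2 * (deriv θ (x₁ ^ 2)) ^ 2 + θ (x₁ ^ 2)))
          + (1 - deriv θ (x₁ ^ 2)) *
            ∑ j ∈ Finset.univ.filter (fun j : Fin n => 2 ≤ (j : ℕ)), ‖v j‖ ^ 2) ∧
    -- and every element of `T_p^ℂΣ` has this form
    (∀ v ∈ complexTangent (rho n θ) p, ∃ lam : ℂ,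
      (∀ j : Fin n, (j : ℕ) = 0 → v j = -(Complex.I * lam * y₂)) ∧
      (∀ j : Fin n, (j : ℕ) = 1 →
        v j = lam * ((x₁ : ℂ) * (deriv θ (x₁ ^ 2) : ℝ) + Complex.I * y₁))) :=
  stmt_4_general hn x₁ y₁ y₂ θ V hV hs₀ hθ hθpos hcirc p hp
end

section
/- Let n > 1, let U ⊂ ℝⁿ∖{0} be an open O(n)-invariant set, I = {|x| : x ∈ U}, and let f : I → (0,∞) be of class C². Set ρ(x+iy) = |y|² − f(|x|)² and Σ = {x+iy : x ∈ U, |y| = f(|x|)}. Then L_ρ(p;v) > 0 for every p ∈ Σ and every nonzero v ∈ T_p^ℂΣ (i.e. the domain D₋ = {x+iy : x ∈ U, |y| < f(|x|)} is strongly pseudoconvex along Σ) if and only if for every t ∈ I one has f(t) f'(t)/t < 1 and f(t) ( f''(t) + f'(t)³/t ) < 1. -/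
open Complex Set

/-- `ρ(x+iy) = |y|² - f(|x|)²`. -/
noncomputable def rhoF (n : ℕ) (f : ℝ → ℝ) : (Fin n → ℂ) → ℝ :=
  fun z => (∑ j, (z j).im ^ 2) - (f (Real.sqrt (∑ j, (z j).re ^ 2))) ^ 2

/-- The hypersurface `Σ = {x+iy : x ∈ U, |y| = f(|x|)}`. -/
def SigmaSetF (n : ℕ) (U : Set (Fin n → ℝ)) (f : ℝ → ℝ) : Set (Fin n → ℂ) :=
  {z | (fun j => (z j).re) ∈ U ∧
    Real.sqrt (∑ j, (z j).im ^ 2) = f (Real.sqrt (∑ j, (z j).re ^ 2))}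

/-!
Write `z = x + iy`, `r = |x|`, `κ = f f'/r` and `ρ = |y|² - g(|x|²)` with `g(s) = f(√s)²`.
For `v = a + ib` the chain rule gives
`2 L_ρ(p;v) = (1 - κ)(|a|² + |b|²) - (f'² + f f'' - κ) P / r²`, where `P = ⟨x,a⟩² + ⟨x,b⟩²`.
If `v ∈ T_p^ℂΣ`, then `(⟨y,a⟩, ⟨y,b⟩) = κ (-⟨x,b⟩, ⟨x,a⟩)`, and adding the Gram inequalities of
`(x, y, a)` and `(x, y, b)` gives `(1 + f'²) P ≤ r² |v|²`. Since
`2 r² L_ρ = (1 - κ)(r² |v|² - (1 + f'²) P) + (1 - f (f'' + f'³/r)) P`, the two conditions make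
`L_ρ` positive. Conversely, `2 L_ρ` equals `1 - κ` at `x = r e₀, y = f e₀, v = e₁`, and
`1 - f (f'' + f'³/r)` at `x = r e₀, y = f e₁, v = e₀ + i f' e₁`.
-/

open scoped RealInnerProductSpace
open Filter Topology

section CompNormSq
variable {E F : Type*} [NormedAddCommGroup E] [NormedSpace ℝ E]
  [NormedAddCommGroup F] [InnerProductSpace ℝ F]

noncomputable def pullbackInner (A : E →L[ℝ] F) : E →L[ℝ] E →L[ℝ] ℝ :=
  (innerSL ℝ).bilinearComp A A

@[simp] lemma pullbackInner_apply (A : E →L[ℝ] F) (u w : E) :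
    pullbackInner A u w = ⟪A u, A w⟫ := rfl

variable (A : E →L[ℝ] F) {h h' : ℝ → ℝ}

lemma hasFDerivAt_comp_norm_sq {z : E} (hh : HasDerivAt h (h' (‖A z‖ ^ 2)) (‖A z‖ ^ 2)) :
    HasFDerivAt (fun z => h (‖A z‖ ^ 2)) ((2 * h' (‖A z‖ ^ 2)) • pullbackInner A z) z := by
  refine (hh.comp_hasFDerivAt z A.hasFDerivAt.norm_sq).congr_fderiv ?_
  ext u
  simp only [smul_apply, ContinuousLinearMap.comp_apply, coe_innerSL_apply, nsmul_eq_mul,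
    Nat.cast_ofNat, smul_eq_mul, pullbackInner_apply]
  ring

lemma hasFDerivAt_smul_pullbackInner {p : E} {h'' : ℝ} (hh' : HasDerivAt h' h'' (‖A p‖ ^ 2)) :
    HasFDerivAt (fun z => (2 * h' (‖A z‖ ^ 2)) • pullbackInner A z)
      ((2 * h' (‖A p‖ ^ 2)) • pullbackInner A
        + ((4 * h'') • pullbackInner A p).smulRight (pullbackInner A p)) p := by
  have hc := (hh'.comp_hasFDerivAt p A.hasFDerivAt.norm_sq).const_mul 2
  refine (hc.smul (pullbackInner A).hasFDerivAt).congr_fderiv ?_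
  ext u w
  simp only [Function.comp_apply, add_apply, smul_apply, ContinuousLinearMap.smulRight_apply,
    ContinuousLinearMap.comp_apply, coe_innerSL_apply, nsmul_eq_mul, Nat.cast_ofNat, smul_eq_mul,
    pullbackInner_apply]
  ring

end CompNormSq

noncomputable def sqrtProfile (f : ℝ → ℝ) (s : ℝ) : ℝ := f (√s) ^ 2

noncomputable def sqrtProfileDeriv (f : ℝ → ℝ) (s : ℝ) : ℝ := f (√s) * deriv f (√s) / √s

section SqrtProfile
variable {f : ℝ → ℝ}

lemma sqrtProfileDeriv_sq {r : ℝ} (hr : 0 ≤ r) :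
    sqrtProfileDeriv f (r ^ 2) = f r * deriv f r / r := by
  rw [sqrtProfileDeriv, Real.sqrt_sq hr]

lemma hasDerivAt_sqrtProfile {s : ℝ} (hs : 0 < s) (hf : DifferentiableAt ℝ f (√s)) :
    HasDerivAt (sqrtProfile f) (sqrtProfileDeriv f s) s := by
  have hs' : √s ≠ 0 := (Real.sqrt_pos.2 hs).ne'
  refine ((hf.hasDerivAt.comp s (Real.hasDerivAt_sqrt hs.ne')).pow 2).congr_deriv ?_
  simp only [sqrtProfileDeriv, Function.comp_apply]
  field_simp
  ring

lemma hasDerivAt_sqrtProfileDeriv {r : ℝ} (hr : 0 < r) (hf : DifferentiableAt ℝ f r)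
    (hf' : DifferentiableAt ℝ (deriv f) r) :
    HasDerivAt (sqrtProfileDeriv f)
      ((deriv f r ^ 2 + f r * deriv (deriv f) r - f r * deriv f r / r) / (2 * r ^ 2)) (r ^ 2) := by
  have hsqrt : HasDerivAt Real.sqrt (1 / (2 * r)) (r ^ 2) := by
    simpa [Real.sqrt_sq hr.le] using Real.hasDerivAt_sqrt (pow_pos hr 2).ne'
  have hquot := (hf.hasDerivAt.mul hf'.hasDerivAt).div (hasDerivAt_id r) hr.ne'
  refine (hquot.comp_of_eq (x := r ^ 2) hsqrt (Real.sqrt_sq hr.le).symm).congr_deriv ?_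
  simp only [id, Pi.mul_apply]
  field_simp

lemma ContDiffAt.differentiableAt_deriv {r : ℝ} (hf : ContDiffAt ℝ 2 f r) :
    DifferentiableAt ℝ (deriv f) r :=
  ((hf.fderiv_right (m := 1) (by norm_num)).differentiableAt one_ne_zero).clm_apply
    (differentiableAt_const 1)

end SqrtProfile

lemma EuclideanSpace.norm_eq_sqrt_sum_sq {ι : Type*} [Fintype ι] (x : EuclideanSpace ℝ ι) :
    ‖x‖ = √(∑ i, x i ^ 2) := by
  rw [← EuclideanSpace.real_norm_sq_eq, Real.sqrt_sq (norm_nonneg x)]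

section Rho
variable {n : ℕ}

noncomputable def reVec (n : ℕ) : (Fin n → ℂ) →L[ℝ] EuclideanSpace ℝ (Fin n) :=
  (EuclideanSpace.equiv (Fin n) ℝ).symm.toContinuousLinearMap ∘L
    ContinuousLinearMap.pi fun j => reCLM ∘L ContinuousLinearMap.proj j

noncomputable def imVec (n : ℕ) : (Fin n → ℂ) →L[ℝ] EuclideanSpace ℝ (Fin n) :=
  (EuclideanSpace.equiv (Fin n) ℝ).symm.toContinuousLinearMap ∘L
    ContinuousLinearMap.pi fun j => imCLM ∘L ContinuousLinearMap.proj j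

def ofReIm (x y : EuclideanSpace ℝ (Fin n)) : Fin n → ℂ := fun j => ⟨x j, y j⟩

@[simp] lemma reVec_apply (z : Fin n → ℂ) (j : Fin n) : reVec n z j = (z j).re := rfl

@[simp] lemma imVec_apply (z : Fin n → ℂ) (j : Fin n) : imVec n z j = (z j).im := rfl

@[simp] lemma reVec_ofReIm (x y : EuclideanSpace ℝ (Fin n)) : reVec n (ofReIm x y) = x := rfl

@[simp] lemma imVec_ofReIm (x y : EuclideanSpace ℝ (Fin n)) : imVec n (ofReIm x y) = y := rfl

@[simp] lemma reVec_I_smul (v : Fin n → ℂ) : reVec n (I • v) = -imVec n v := by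
  ext j; simp

@[simp] lemma imVec_I_smul (v : Fin n → ℂ) : imVec n (I • v) = reVec n v := by
  ext j; simp

lemma sum_re_sq (z : Fin n → ℂ) : ∑ j, (z j).re ^ 2 = ‖reVec n z‖ ^ 2 :=
  (EuclideanSpace.real_norm_sq_eq (reVec n z)).symm

lemma sum_im_sq (z : Fin n → ℂ) : ∑ j, (z j).im ^ 2 = ‖imVec n z‖ ^ 2 :=
  (EuclideanSpace.real_norm_sq_eq (imVec n z)).symm

lemma norm_reVec_sq_add_norm_imVec_sq_pos {v : Fin n → ℂ} (hv : v ≠ 0) :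
    0 < ‖reVec n v‖ ^ 2 + ‖imVec n v‖ ^ 2 := by
  obtain ⟨j, hj⟩ := Function.ne_iff.1 hv
  rw [← sum_re_sq, ← sum_im_sq, ← Finset.sum_add_distrib]
  refine Finset.sum_pos' (fun _ _ => by positivity) ⟨j, Finset.mem_univ j, ?_⟩
  simpa [Complex.normSq_apply, sq] using Complex.normSq_pos.2 hj

lemma mem_SigmaSetF_iff {U : Set (Fin n → ℝ)} {f : ℝ → ℝ} {z : Fin n → ℂ} :
    z ∈ SigmaSetF n U f ↔ (reVec n z).ofLp ∈ U ∧ ‖imVec n z‖ = f ‖reVec n z‖ := by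
  rw [SigmaSetF, mem_ofPred_eq, sum_im_sq, sum_re_sq, Real.sqrt_sq (norm_nonneg _),
    Real.sqrt_sq (norm_nonneg _)]
  rfl

lemma rhoF_eq (f : ℝ → ℝ) :
    rhoF n f = fun z => ‖imVec n z‖ ^ 2 - sqrtProfile f (‖reVec n z‖ ^ 2) := by
  ext z
  rw [rhoF, sqrtProfile, sum_im_sq, sum_re_sq, Real.sqrt_sq (norm_nonneg _)]

variable {f : ℝ → ℝ}

lemma hasFDerivAt_rhoF {z : Fin n → ℂ} (hr : 0 < ‖reVec n z‖)
    (hf : DifferentiableAt ℝ f ‖reVec n z‖) :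
    HasFDerivAt (rhoF n f) ((2 : ℝ) • pullbackInner (imVec n) z
      - (2 * sqrtProfileDeriv f (‖reVec n z‖ ^ 2)) • pullbackInner (reVec n) z) z := by
  rw [rhoF_eq]
  have hprofile := hasFDerivAt_comp_norm_sq (reVec n)
    (hasDerivAt_sqrtProfile (by positivity) (by rwa [Real.sqrt_sq (norm_nonneg _)]))
  refine ((imVec n).hasFDerivAt.norm_sq.sub hprofile).congr_fderiv ?_
  ext v
  simp

lemma fderiv_rhoF_apply {p : Fin n → ℂ} {r : ℝ} (hpr : ‖reVec n p‖ = r) (hr : 0 < r)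
    (hf : DifferentiableAt ℝ f r) (v : Fin n → ℂ) :
    fderiv ℝ (rhoF n f) p v
      = 2 * (⟪imVec n p, imVec n v⟫ - f r * deriv f r / r * ⟪reVec n p, reVec n v⟫) := by
  subst hpr
  rw [(hasFDerivAt_rhoF hr hf).fderiv, sqrtProfileDeriv_sq hr.le]
  simp only [sub_apply, smul_apply, pullbackInner_apply, smul_eq_mul]
  ring

lemma mem_complexTangent_rhoF_iff {p v : Fin n → ℂ} {r : ℝ} (hpr : ‖reVec n p‖ = r)
    (hr : 0 < r) (hf : DifferentiableAt ℝ f r) :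
    v ∈ complexTangent (rhoF n f) p ↔
      ⟪imVec n p, imVec n v⟫ = f r * deriv f r / r * ⟪reVec n p, reVec n v⟫ ∧
      ⟪imVec n p, reVec n v⟫ = -(f r * deriv f r / r * ⟪reVec n p, imVec n v⟫) := by
  simp only [complexTangent, mem_ofPred_eq, fderiv_rhoF_apply hpr hr hf, reVec_I_smul,
    imVec_I_smul, inner_neg_right]
  constructor <;> rintro ⟨h₁, h₂⟩ <;> constructor <;> linarith

lemma leviForm_rhoF {p : Fin n → ℂ} {r : ℝ} (hpr : ‖reVec n p‖ = r) (hr : 0 < r)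
    (hf : ContDiffAt ℝ 2 f r) (v : Fin n → ℂ) :
    leviForm (rhoF n f) p v
      = ((1 - f r * deriv f r / r) * (‖reVec n v‖ ^ 2 + ‖imVec n v‖ ^ 2)
        - (deriv f r ^ 2 + f r * deriv (deriv f) r - f r * deriv f r / r) / r ^ 2
          * (⟪reVec n p, reVec n v⟫ ^ 2 + ⟪reVec n p, imVec n v⟫ ^ 2)) / 2 := by
  subst hpr
  have hnear : ∀ᶠ z in 𝓝 p, 0 < ‖reVec n z‖ ∧ DifferentiableAt ℝ f ‖reVec n z‖ :=
    (reVec n).continuous.norm.continuousAt.eventually ((lt_mem_nhds hr).and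
      ((hf.eventually (by simp)).mono fun _ h => h.differentiableAt (by simp)))
  set D : (Fin n → ℂ) → (Fin n → ℂ) →L[ℝ] ℝ := fun z => (2 : ℝ) • pullbackInner (imVec n) z
      - (2 * sqrtProfileDeriv f (‖reVec n z‖ ^ 2)) • pullbackInner (reVec n) z
  have hfderiv : fderiv ℝ (rhoF n f) =ᶠ[𝓝 p] D :=
    hnear.mono fun z hz => (hasFDerivAt_rhoF hz.1 hz.2).fderiv
  have hsecond : HasFDerivAt D _ p :=
    ((pullbackInner (imVec n)).hasFDerivAt.const_smul (2 : ℝ)).sub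
      (hasFDerivAt_smul_pullbackInner (reVec n)
        (hasDerivAt_sqrtProfileDeriv hr (hf.differentiableAt two_ne_zero)
          hf.differentiableAt_deriv))
  rw [leviForm, iteratedFDeriv_two_apply, iteratedFDeriv_two_apply, hfderiv.fderiv_eq,
    hsecond.fderiv, sqrtProfileDeriv_sq hr.le]
  simp only [Matrix.cons_val_zero, Matrix.cons_val_one, Matrix.cons_val_fin_one, sub_apply,
    smul_apply, add_apply, ContinuousLinearMap.smulRight_apply, pullbackInner_apply, smul_eq_mul,
    reVec_I_smul, imVec_I_smul, inner_neg_left, inner_neg_right, real_inner_self_eq_norm_sq]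
  field_simp
  ring

end Rho

section Gram
variable {F : Type*} [NormedAddCommGroup F] [InnerProductSpace ℝ F]

lemma gram_det_three_nonneg (x y a : F) :
    ‖y‖ ^ 2 * ⟪x, a⟫ ^ 2 + ‖x‖ ^ 2 * ⟪y, a⟫ ^ 2 - 2 * ⟪x, y⟫ * ⟪x, a⟫ * ⟪y, a⟫
      ≤ (‖x‖ ^ 2 * ‖y‖ ^ 2 - ⟪x, y⟫ ^ 2) * ‖a‖ ^ 2 := by
  have h := (Matrix.posSemidef_gram ℝ ![x, y, a]).det_nonneg
  simp only [Matrix.det_fin_three, Matrix.gram_apply, Matrix.cons_val_zero, Matrix.cons_val_one,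
    Matrix.cons_val, real_inner_self_eq_norm_sq, real_inner_comm] at h
  linarith

lemma inner_sq_add_inner_sq_le_of_rotated (x y a b : F) (k : ℝ)
    (hb : ⟪y, b⟫ = k * ⟪x, a⟫) (ha : ⟪y, a⟫ = -(k * ⟪x, b⟫)) :
    (‖y‖ ^ 2 + k ^ 2 * ‖x‖ ^ 2) * (⟪x, a⟫ ^ 2 + ⟪x, b⟫ ^ 2)
      ≤ ‖x‖ ^ 2 * ‖y‖ ^ 2 * (‖a‖ ^ 2 + ‖b‖ ^ 2) := by
  have hga := gram_det_three_nonneg x y a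
  have hgb := gram_det_three_nonneg x y b
  rw [ha] at hga
  rw [hb] at hgb
  nlinarith [mul_nonneg (sq_nonneg ⟪x, y⟫) (add_nonneg (sq_nonneg ‖a‖) (sq_nonneg ‖b‖))]

end Gram

lemma leviFormula_pos {r F d₁ d₂ S P : ℝ} (hr : 0 < r) (hS : 0 < S) (hP : 0 ≤ P)
    (h₁ : F * d₁ / r < 1) (h₂ : F * (d₂ + d₁ ^ 3 / r) < 1)
    (hPS : (1 + d₁ ^ 2) * P ≤ r ^ 2 * S) :
    0 < ((1 - F * d₁ / r) * S - (d₁ ^ 2 + F * d₂ - F * d₁ / r) / r ^ 2 * P) / 2 := by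
  have hsplit : (1 - F * d₁ / r) * S - (d₁ ^ 2 + F * d₂ - F * d₁ / r) / r ^ 2 * P
      = ((1 - F * d₁ / r) * (r ^ 2 * S - (1 + d₁ ^ 2) * P)
        + (1 - F * (d₂ + d₁ ^ 3 / r)) * P) / r ^ 2 := by
    field_simp
    ring
  rw [hsplit]
  refine half_pos (div_pos ?_ (by positivity))
  rcases hP.eq_or_lt with hP0 | hPpos
  · simp only [← hP0, mul_zero, sub_zero, add_zero]
    exact mul_pos (by linarith) (by positivity)
  · exact add_pos_of_nonneg_of_pos (mul_nonneg (by linarith) (by linarith))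
      (mul_pos (by linarith) hPpos)

section Levi
variable {n : ℕ} {f : ℝ → ℝ}

lemma leviForm_rhoF_pos {p v : Fin n → ℂ} {r : ℝ} (hpr : ‖reVec n p‖ = r) (hr : 0 < r)
    (hf : ContDiffAt ℝ 2 f r) (hfr : 0 < f r) (hp : ‖imVec n p‖ = f r)
    (h₁ : f r * deriv f r / r < 1) (h₂ : f r * (deriv (deriv f) r + deriv f r ^ 3 / r) < 1)
    (hv : v ∈ complexTangent (rhoF n f) p) (hv0 : v ≠ 0) :
    0 < leviForm (rhoF n f) p v := by
  rw [mem_complexTangent_rhoF_iff hpr hr (hf.differentiableAt two_ne_zero)] at hv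
  have hgram := inner_sq_add_inner_sq_le_of_rotated _ _ _ _ _ hv.1 hv.2
  rw [hpr, hp] at hgram
  rw [leviForm_rhoF hpr hr hf]
  refine leviFormula_pos hr (norm_reVec_sq_add_norm_imVec_sq_pos hv0) (by positivity) h₁ h₂ ?_
  refine le_of_mul_le_mul_left ?_ (pow_pos hfr 2)
  calc f r ^ 2 * ((1 + deriv f r ^ 2)
        * (⟪reVec n p, reVec n v⟫ ^ 2 + ⟪reVec n p, imVec n v⟫ ^ 2))
      = (f r ^ 2 + (f r * deriv f r / r) ^ 2 * r ^ 2)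
        * (⟪reVec n p, reVec n v⟫ ^ 2 + ⟪reVec n p, imVec n v⟫ ^ 2) := by
        field_simp
    _ ≤ r ^ 2 * f r ^ 2 * (‖reVec n v‖ ^ 2 + ‖imVec n v‖ ^ 2) := hgram
    _ = f r ^ 2 * (r ^ 2 * (‖reVec n v‖ ^ 2 + ‖imVec n v‖ ^ 2)) := by ring

lemma conditions_of_leviForm_rhoF_pos {t : ℝ} (ht : 0 < t) (hft : 0 < f t)
    (hf : ContDiffAt ℝ 2 f t) {i j : Fin n} (hij : i ≠ j)
    (hL : ∀ x y : EuclideanSpace ℝ (Fin n), ‖x‖ = t → ‖y‖ = f t →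
      ∀ v ∈ complexTangent (rhoF n f) (ofReIm x y), v ≠ 0 →
        0 < leviForm (rhoF n f) (ofReIm x y) v) :
    f t * deriv f t / t < 1 ∧ f t * (deriv (deriv f) t + deriv f t ^ 3 / t) < 1 := by
  set e₀ : EuclideanSpace ℝ (Fin n) := EuclideanSpace.single i 1
  set e₁ : EuclideanSpace ℝ (Fin n) := EuclideanSpace.single j 1
  have he : ⟪e₀, e₁⟫ = 0 := by simp [e₀, e₁, EuclideanSpace.inner_single_left, hij.symm]
  have hx : ‖t • e₀‖ = t := by simp [e₀, norm_smul, ht.le]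
  have hx' (y : EuclideanSpace ℝ (Fin n)) : ‖reVec n (ofReIm (t • e₀) y)‖ = t := hx
  have hdf : DifferentiableAt ℝ f t := hf.differentiableAt two_ne_zero
  constructor
  · have hv : ofReIm e₁ 0 ∈ complexTangent (rhoF n f) (ofReIm (t • e₀) (f t • e₀)) := by
      rw [mem_complexTangent_rhoF_iff (hx' _) ht hdf]
      simp [inner_smul_left, he]
    have hv0 : ofReIm e₁ 0 ≠ 0 := fun h => by simpa [e₁] using congrArg (reVec n) h
    have hval : leviForm (rhoF n f) (ofReIm (t • e₀) (f t • e₀)) (ofReIm e₁ 0)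
        = (1 - f t * deriv f t / t) / 2 := by
      rw [leviForm_rhoF (hx' _) ht hf]
      simp [inner_smul_left, he, e₁]
    linarith [hL _ _ hx (by simp [e₀, norm_smul, hft.le]) _ hv hv0]
  · have hv : ofReIm e₀ (deriv f t • e₁)
        ∈ complexTangent (rhoF n f) (ofReIm (t • e₀) (f t • e₁)) := by
      rw [mem_complexTangent_rhoF_iff (hx' _) ht hdf]
      simp only [imVec_ofReIm, reVec_ofReIm, inner_smul_right, inner_smul_left, Real.ringHom_apply,
        real_inner_self_eq_norm_sq, PiLp.norm_single, norm_one, one_pow, mul_one, real_inner_comm,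
        he, mul_zero, neg_zero, and_true, e₀, e₁]
      field_simp
    have hv0 : ofReIm e₀ (deriv f t • e₁) ≠ 0 := fun h => by
      simpa [e₀] using congrArg (reVec n) h
    have hval : leviForm (rhoF n f) (ofReIm (t • e₀) (f t • e₁)) (ofReIm e₀ (deriv f t • e₁))
        = (1 - f t * (deriv (deriv f) t + deriv f t ^ 3 / t)) / 2 := by
      rw [leviForm_rhoF (hx' _) ht hf]
      simp only [reVec_ofReIm, imVec_ofReIm, PiLp.norm_single, norm_one, one_pow, norm_smul,
        Real.norm_eq_abs, mul_one, sq_abs, inner_smul_left, inner_smul_right, Real.ringHom_apply,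
        real_inner_self_eq_norm_sq, he, mul_zero, zero_pow two_ne_zero, add_zero, e₀, e₁]
      field_simp
      ring
    linarith [hL _ _ hx (by simp [e₁, norm_smul, hft.le]) _ hv hv0]

end Levi

theorem stmt_5_general {n : ℕ} (hn : 1 < n)
    (U : Set (Fin n → ℝ))
    (hU0 : (0 : Fin n → ℝ) ∉ U)
    (hUinv : ∀ x x' : Fin n → ℝ, x ∈ U → (∑ j, x' j ^ 2) = (∑ j, x j ^ 2) → x' ∈ U)
    (f : ℝ → ℝ) (V : Set ℝ) (hV : IsOpen V)
    (hIV : {t : ℝ | ∃ x ∈ U, t = Real.sqrt (∑ j, x j ^ 2)} ⊆ V)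
    (hf : ContDiffOn ℝ 2 f V)
    (hfpos : ∀ t ∈ {t : ℝ | ∃ x ∈ U, t = Real.sqrt (∑ j, x j ^ 2)}, 0 < f t) :
    (∀ p ∈ SigmaSetF n U f, ∀ v ∈ complexTangent (rhoF n f) p, v ≠ 0 →
        0 < leviForm (rhoF n f) p v)
    ↔ (∀ t ∈ {t : ℝ | ∃ x ∈ U, t = Real.sqrt (∑ j, x j ^ 2)},
        f t * deriv f t / t < 1 ∧
        f t * (deriv (deriv f) t + (deriv f t) ^ 3 / t) < 1) := by
  have hI : ∀ x ∈ U, 0 < √(∑ j, x j ^ 2) ∧ ContDiffAt ℝ 2 f √(∑ j, x j ^ 2) := by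
    intro x hx
    refine ⟨?_, hf.contDiffAt (hV.mem_nhds (hIV ⟨x, hx, rfl⟩))⟩
    rw [← EuclideanSpace.norm_eq_sqrt_sum_sq (WithLp.toLp 2 x), norm_pos_iff]
    simpa using ne_of_mem_of_not_mem hx hU0
  constructor
  · rintro hL t ⟨x, hxU, rfl⟩
    refine conditions_of_leviForm_rhoF_pos (hI x hxU).1 (hfpos _ ⟨x, hxU, rfl⟩) (hI x hxU).2
      (i := ⟨0, by omega⟩) (j := ⟨1, hn⟩) (by simp) fun x' y hx' hy v hv hv0 => hL _ ?_ v hv hv0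
    rw [mem_SigmaSetF_iff, reVec_ofReIm, imVec_ofReIm, hx']
    refine ⟨hUinv x _ hxU ?_, hy⟩
    rw [← EuclideanSpace.real_norm_sq_eq, hx', Real.sq_sqrt (by positivity)]
  · rintro hcond p hp v hv hv0
    rw [mem_SigmaSetF_iff] at hp
    have hr := EuclideanSpace.norm_eq_sqrt_sum_sq (reVec n p)
    have hrI : ‖reVec n p‖ ∈ {t : ℝ | ∃ x ∈ U, t = Real.sqrt (∑ j, x j ^ 2)} := ⟨_, hp.1, hr⟩
    obtain ⟨hr0, hfr⟩ := hI _ hp.1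
    rw [← hr] at hr0 hfr
    exact leviForm_rhoF_pos rfl hr0 hfr (hfpos _ hrI) hp.2 (hcond _ hrI).1 (hcond _ hrI).2 hv hv0

theorem stmt_5 {n : ℕ} (hn : 1 < n)
    (U : Set (Fin n → ℝ)) (hUne : U.Nonempty) (hUopen : IsOpen U)
    (hU0 : (0 : Fin n → ℝ) ∉ U)
    (hUinv : ∀ x x' : Fin n → ℝ, x ∈ U → (∑ j, x' j ^ 2) = (∑ j, x j ^ 2) → x' ∈ U)
    (f : ℝ → ℝ) (V : Set ℝ) (hV : IsOpen V)
    (hIV : {t : ℝ | ∃ x ∈ U, t = Real.sqrt (∑ j, x j ^ 2)} ⊆ V)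
    (hf : ContDiffOn ℝ 2 f V)
    (hfpos : ∀ t ∈ {t : ℝ | ∃ x ∈ U, t = Real.sqrt (∑ j, x j ^ 2)}, 0 < f t) :
    (∀ p ∈ SigmaSetF n U f, ∀ v ∈ complexTangent (rhoF n f) p, v ≠ 0 →
        0 < leviForm (rhoF n f) p v)
    ↔ (∀ t ∈ {t : ℝ | ∃ x ∈ U, t = Real.sqrt (∑ j, x j ^ 2)},
        f t * deriv f t / t < 1 ∧
        f t * (deriv (deriv f) t + (deriv f t) ^ 3 / t) < 1) :=
  stmt_5_general hn U hU0 hUinv f V hV hIV hf hfpos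
end
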